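/- arXiv:1206.2682 — 3 statements merged into one kernel-verified Lean document; each statement's English description precedes it below -/
import Mathlib

section
/- Every escape sequence for a string σ in a proper partial transformation T contains a subsequence which is a reduced escape sequence for σ. -/
/-!
A non-reduced escape sequence `σ₀, …, σₙ` has a strictly shorter escape subsequence, so
induction on `n` finishes. If `T(σᵢ) = ⟨⟩` for some `i < n`, cut the sequence at `σᵢ`. If
`σᵢ ⊒ T(σⱼ)` with `i > j + 1` and `σᵢ` unblocked, jump from `σⱼ` straight to `σᵢ`: that jump
meets the escape conditions exactly because `σᵢ` is unblocked, and all other steps are old ones.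
-/

/-- A proper partial transformation on binary strings, given by finite prefix-free
sets `Tm` (= T₋) and `Tp` (= T₊) whose cylinders cover Cantor space. -/
structure ProperPT where
  T : List Bool → List Bool
  Tm : Finset (List Bool)
  Tp : Finset (List Bool)
  mono : ∀ σ τ : List Bool, σ <+: τ → T σ <+: T τ
  prefixFree : ∀ σ ∈ Tm ∪ Tp, ∀ τ ∈ Tm ∪ Tp, σ <+: τ → σ = τ
  covers : ∀ x : ℕ → Bool, ∃ σ ∈ Tm ∪ Tp, ∀ i : Fin σ.length, x i = σ.get i
  constAbove : ∀ τ ∈ Tm, ∀ σ : List Bool, τ <+: σ → T σ = T τ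
  extAbove : ∀ τ ∈ Tp, ∀ ρ : List Bool, T (τ ++ ρ) = T τ ++ ρ
  shrink : ∀ σ ∈ Tm, (T σ).length < σ.length
  lenEq : ∀ σ ∈ Tp, (T σ).length = σ.length
  noExtend : ∀ σ ∈ Tp, ∀ τ ∈ Tm ∪ Tp, τ ≠ σ → ¬ T σ <+: T τ

namespace ProperPT

/-- `σ` is determined: some initial segment of it lies in `T₋ ∪ T₊`. -/
def Determined (P : ProperPT) (σ : List Bool) : Prop :=
  ∃ τ ∈ P.Tm ∪ P.Tp, τ <+: σ

/-- `τ` is blocked: some `σ` has `T σ ⊐ τ` (a strict extension of `τ`). -/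
def Blocked (P : ProperPT) (τ : List Bool) : Prop :=
  ∃ σ : List Bool, τ <+: P.T σ ∧ τ ≠ P.T σ

/-- `s 0, …, s n` is an escape sequence for `σ` in `P`. -/
def IsEscape (P : ProperPT) (n : ℕ) (s : ℕ → List Bool) (σ : List Bool) : Prop :=
  s 0 = σ ∧
  (∀ i, 1 ≤ i → i ≤ n → (s i).length = (s 1).length) ∧
  (∀ i < n, P.T (s i) <+: s (i + 1)) ∧
  (∀ i < n, P.Blocked (s (i + 1)) → s (i + 1) = P.T (s i)) ∧
  P.T (s n) = [] ∧
  (∀ i ≤ n, P.Determined (s i))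

/-- The escape sequence `s 0, …, s n` is reduced. -/
def IsReduced (P : ProperPT) (n : ℕ) (s : ℕ → List Bool) : Prop :=
  (∀ i ≤ n, ∀ j ≤ n, P.T (s j) <+: s i → i ≤ j + 1 ∨ P.Blocked (s i)) ∧
  (∀ i < n, P.T (s i) ≠ [])

/-- `s 0, …, s k` is an open loop in `P`. -/
def IsOpenLoop (P : ProperPT) (k : ℕ) (s : ℕ → List Bool) : Prop :=
  (∀ i ≤ k, (s i).length = (s 0).length) ∧
  (∀ i < k, P.T (s i) = s (i + 1)) ∧
  P.T (s k) <+: s 0 ∧ P.T (s k) ≠ s 0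

/-- `P` is partitioned into open loops: every string is a term of some open loop. -/
def PartitionedIntoLoops (P : ProperPT) : Prop :=
  ∀ σ : List Bool, ∃ (k : ℕ) (s : ℕ → List Bool) (i : ℕ),
    i ≤ k ∧ P.IsOpenLoop k s ∧ s i = σ

/-- `P` is escapable. -/
def Escapable (P : ProperPT) : Prop :=
  ∀ σ : List Bool, P.Determined σ → (P.T σ).length < σ.length →
    ∃ (n : ℕ) (s : ℕ → List Bool), P.IsEscape n s σ

/-- `P` is useful: proper (by construction), partitioned into open loops, escapable. -/
def Useful (P : ProperPT) : Prop :=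
  P.PartitionedIntoLoops ∧ P.Escapable

end ProperPT

/-- `x` lies in the cylinder `[σ]`. -/
def inCyl (σ : List Bool) (x : ℕ → Bool) : Prop :=
  ∀ i : Fin σ.length, x i = σ.get i

namespace ProperPT

def IsSubseqIndex (m n : ℕ) (f : ℕ → ℕ) : Prop :=
  f 0 = 0 ∧ (∀ k ≤ m, f k ≤ n) ∧ StrictMonoOn f (Set.Iic m)

theorem IsSubseqIndex.comp {l m n : ℕ} {f g : ℕ → ℕ} (hf : IsSubseqIndex m n f)
    (hg : IsSubseqIndex l m g) : IsSubseqIndex l n (f ∘ g) :=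
  ⟨by simp [Function.comp, hg.1, hf.1], fun k hk => hf.2.1 _ (hg.2.1 k hk),
    fun _ ha _ hb hab => hf.2.2 (hg.2.1 _ ha) (hg.2.1 _ hb) (hg.2.2 ha hb hab)⟩

theorem isSubseqIndex_of_le {m n : ℕ} (h : m ≤ n) : IsSubseqIndex m n id :=
  ⟨rfl, fun _ hk => hk.trans h, fun _ _ _ _ hab => hab⟩

theorem IsEscape.subseq {P : ProperPT} {n m : ℕ} {s : ℕ → List Bool} {σ : List Bool}
    {f : ℕ → ℕ} (h : P.IsEscape n s σ) (hf : IsSubseqIndex m n f)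
    (hstep : ∀ k < m, f (k + 1) = f k + 1 ∨
      (P.T (s (f k)) <+: s (f (k + 1)) ∧ ¬ P.Blocked (s (f (k + 1)))))
    (hend : P.T (s (f m)) = []) :
    P.IsEscape m (fun k => s (f k)) σ := by
  obtain ⟨hf0, hfn, hfmono⟩ := hf
  obtain ⟨h0, hlen, hpre, hblk, -, hdet⟩ := h
  have hpos : ∀ k, 1 ≤ k → k ≤ m → 0 < f k := fun k hk hkm => by
    simpa [hf0] using hfmono (Set.mem_Iic.2 (Nat.zero_le m)) (Set.mem_Iic.2 hkm) (by omega)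
  have hlt : ∀ k < m, f k < n := fun k hk =>
    (hfmono (Set.mem_Iic.2 hk.le) (Set.mem_Iic.2 le_rfl) hk).trans_le (hfn m le_rfl)
  refine ⟨by simp [hf0, h0], fun k hk hkm => ?_, fun k hk => ?_, fun k hk hb => ?_, hend,
    fun k hk => hdet _ (hfn k hk)⟩
  · rw [hlen _ (hpos k hk hkm) (hfn k hkm),
      hlen _ (hpos 1 le_rfl (hk.trans hkm)) (hfn 1 (hk.trans hkm))]
  · rcases hstep k hk with hs | ⟨hs, -⟩
    · simp only [hs]
      exact hpre _ (hlt k hk)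
    · exact hs
  · rcases hstep k hk with hs | ⟨-, hs⟩
    · simp only [hs] at hb ⊢
      exact hblk _ (hlt k hk) hb
    · exact absurd hb hs

theorem IsEscape.truncate {P : ProperPT} {n i : ℕ} {s : ℕ → List Bool} {σ : List Bool}
    (h : P.IsEscape n s σ) (hi : i ≤ n) (hTi : P.T (s i) = []) : P.IsEscape i s σ :=
  h.subseq (isSubseqIndex_of_le hi) (fun _ _ => Or.inl rfl) hTi

def skipAfter (j d k : ℕ) : ℕ := if k ≤ j then k else k + d

theorem strictMono_skipAfter (j d : ℕ) : StrictMono (skipAfter j d) := by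
  intro a b hab
  unfold skipAfter
  split_ifs <;> omega

theorem skipAfter_succ {j d k : ℕ} (hk : k ≠ j) :
    skipAfter j d (k + 1) = skipAfter j d k + 1 := by
  unfold skipAfter
  split_ifs <;> omega

theorem IsEscape.shortcut {P : ProperPT} {n i j : ℕ} {s : ℕ → List Bool} {σ : List Bool}
    (h : P.IsEscape n s σ) (hin : i ≤ n) (hji : j + 1 < i) (hTji : P.T (s j) <+: s i)
    (hnb : ¬ P.Blocked (s i)) :
    IsSubseqIndex (n - (i - j - 1)) n (skipAfter j (i - j - 1)) ∧
      P.IsEscape (n - (i - j - 1)) (fun k => s (skipAfter j (i - j - 1) k)) σ := by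
  have hlast : skipAfter j (i - j - 1) (n - (i - j - 1)) = n := by
    unfold skipAfter
    split_ifs <;> omega
  have hf : IsSubseqIndex (n - (i - j - 1)) n (skipAfter j (i - j - 1)) :=
    ⟨by simp [skipAfter], fun k hk => hlast ▸ (strictMono_skipAfter _ _).monotone hk,
      (strictMono_skipAfter _ _).strictMonoOn _⟩
  have hend : P.T (s n) = [] := h.2.2.2.2.1
  refine ⟨hf, h.subseq hf (fun k _ => ?_) (by rwa [hlast])⟩
  by_cases hkj : k = j
  · have hj : skipAfter j (i - j - 1) j = j := by simp [skipAfter]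
    have hj1 : skipAfter j (i - j - 1) (j + 1) = i := by simp [skipAfter]; omega
    rw [hkj, hj, hj1]
    exact Or.inr ⟨hTji, hnb⟩
  · exact Or.inl (skipAfter_succ hkj)

theorem IsEscape.exists_shorter {P : ProperPT} {n : ℕ} {s : ℕ → List Bool} {σ : List Bool}
    (h : P.IsEscape n s σ) (hred : ¬ P.IsReduced n s) :
    ∃ m < n, ∃ f, IsSubseqIndex m n f ∧ P.IsEscape m (fun k => s (f k)) σ := by
  simp only [IsReduced, not_and_or, not_forall, not_or, not_le, exists_prop, not_not] at hred
  rcases hred with ⟨i, hin, j, -, hTji, hji, hnb⟩ | ⟨i, hin, hTi⟩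
  · obtain ⟨hf, hesc⟩ := h.shortcut hin hji hTji hnb
    exact ⟨_, by omega, _, hf, hesc⟩
  · exact ⟨i, hin, id, isSubseqIndex_of_le hin.le, h.truncate hin.le hTi⟩

end ProperPT

/-- Every escape sequence for a string `σ` in a proper partial
transformation `T` contains a subsequence which is a reduced escape sequence for `σ`. -/
theorem stmt_0 (P : ProperPT) (σ : List Bool) (n : ℕ) (s : ℕ → List Bool)
    (h : P.IsEscape n s σ) :
    ∃ (m : ℕ) (g : ℕ → ℕ), g 0 = 0 ∧ (∀ i ≤ m, g i ≤ n) ∧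
      StrictMonoOn g (Set.Iic m) ∧
      P.IsEscape m (fun i => s (g i)) σ ∧ P.IsReduced m (fun i => s (g i)) := by
  induction n using Nat.strong_induction_on generalizing s with
  | _ n IH =>
  by_cases hred : P.IsReduced n s
  · exact ⟨n, id, rfl, fun _ hi => hi, fun _ _ _ _ hab => hab, h, hred⟩
  obtain ⟨m, hmn, f, hf, hesc⟩ := h.exists_shorter hred
  obtain ⟨l, g, hg0, hgm, hgmono, hesc', hred'⟩ := IH m hmn _ hesc
  obtain ⟨hfg0, hfgn, hfgmono⟩ := hf.comp ⟨hg0, hgm, hgmono⟩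
  exact ⟨l, f ∘ g, hfg0, hfgn, hfgmono, hesc', hred'⟩
end

section
/- Control of Cesàro averages of a small nonnegative function: let (X, μ) be a probability space, T : X → X measure preserving, h ≥ 0 measurable with ∫ h dμ < ε, and δ > 0. Then there exist n ∈ ℕ and a measurable set A with μ(A) < 4ε/δ such that for every x ∉ A and every n' ≥ n, (1/(n'+1))·Σ_{j=0}^{n'} h(T^j x) < δ. -/
/-!
By the maximal ergodic inequality (Garsia's lemma for `h - δ/2`), the set `A` of points where
some Cesàro average of `h` exceeds `δ/2` satisfies `δ/2 · μ(A) ≤ ∫_A h ≤ ∫ h < ε`, so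
`μ(A) < 2ε/δ`; off `A` every average is at most `δ/2`, so `n = 0` works.
-/

open MeasureTheory Filter
open scoped ENNReal NNReal

/-- The Birkhoff average `(1/(m+1)) Σ_{j=0}^{m} f(T^j x)`. -/
noncomputable def birkAvg {X : Type*} (T : X → X) (f : X → ℝ) (x : X) (m : ℕ) : ℝ :=
  (∑ j ∈ Finset.range (m + 1), f (T^[j] x)) / (m + 1)

/-- `u 0 < v 0 < u 1 < v 1 < ⋯ < u (N-1) < v (N-1)` is an upcrossing sequence of
length `N` for `α, β` for the Birkhoff averages of `f` at `x`. -/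
def Upcross {X : Type*} (T : X → X) (f : X → ℝ) (α β : ℝ) (x : X) (N : ℕ)
    (u v : ℕ → ℕ) : Prop :=
  (∀ i < N, u i < v i) ∧ (∀ i, i + 1 < N → v i < u (i + 1)) ∧
  (∀ i < N, birkAvg T f x (u i) < α) ∧ (∀ i < N, β < birkAvg T f x (v i))

/-- A loose upcrossing sequence of length `N` for `α, β, f, h` at `x`. -/
def LooseUpcross {X : Type*} (T : X → X) (f h : X → ℝ) (α β : ℝ) (x : X) (N : ℕ)
    (u v : ℕ → ℕ) : Prop :=
  (∀ i < N, u i < v i) ∧ (∀ i, i + 1 < N → v i < u (i + 1)) ∧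
  (∀ i < N, birkAvg T f x (u i) < α) ∧
  (∀ i < N, β < birkAvg T (fun y => f y + h y) x (v i))

/-- `τ(x, f, α, β)`: the supremum of lengths of upcrossing sequences. -/
noncomputable def upcrossCount {X : Type*} (T : X → X) (f : X → ℝ) (α β : ℝ)
    (x : X) : ℝ≥0∞ :=
  ⨆ N ∈ {N : ℕ | ∃ u v : ℕ → ℕ, Upcross T f α β x N u v}, (N : ℝ≥0∞)

/-- `υ(x, f, h, α, β)`: the supremum of lengths of loose upcrossing sequences. -/
noncomputable def looseCount {X : Type*} (T : X → X) (f h : X → ℝ) (α β : ℝ)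
    (x : X) : ℝ≥0∞ :=
  ⨆ N ∈ {N : ℕ | ∃ u v : ℕ → ℕ, LooseUpcross T f h α β x N u v}, (N : ℝ≥0∞)


section MaximalErgodic

variable {X : Type*}

lemma lt_partialSups_apply_iff {β : Type*} [LinearOrder β] (f : ℕ → X → β) (n : ℕ) (x : X)
    (b : β) : b < partialSups f n x ↔ ∃ k ≤ n, b < f k x := by
  rw [partialSups_apply, Finset.sup'_apply, Finset.lt_sup'_iff]
  simp only [Finset.mem_Iic]

lemma partialSups_birkhoffSum_nonneg (T : X → X) (g : X → ℝ) (n : ℕ) (x : X) :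
    0 ≤ partialSups (birkhoffSum T g) n x := by
  simpa using le_partialSups_of_le (birkhoffSum T g) (Nat.zero_le n) x

/-- Split off the first step: `S_{k+1} x = g x + S_k (T x)`. -/
lemma partialSups_birkhoffSum_le_max (T : X → X) (g : X → ℝ) (n : ℕ) (x : X) :
    partialSups (birkhoffSum T g) n x ≤ max 0 (g x + partialSups (birkhoffSum T g) n (T x)) := by
  have hmax : partialSups (birkhoffSum T g) n ≤
      fun y => max 0 (g y + partialSups (birkhoffSum T g) n (T y)) := by
    refine partialSups_le _ _ _ fun k hk y => ?_
    cases k with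
    | zero => simp
    | succ k =>
      rw [birkhoffSum_succ']
      exact le_max_of_le_right (add_le_add_right
        (le_partialSups_of_le (birkhoffSum T g) (by omega : k ≤ n) (T y)) _)
  exact hmax x

lemma birkAvg_eq_birkhoffSum_div (T : X → X) (f : X → ℝ) (x : X) (m : ℕ) :
    birkAvg T f x m = birkhoffSum T f (m + 1) x / (m + 1) :=
  rfl

lemma birkhoffSum_sub_const_pos_iff (T : X → X) (f : X → ℝ) (c : ℝ) (x : X) (m : ℕ) :
    0 < birkhoffSum T (fun y => f y - c) (m + 1) x ↔ c < birkAvg T f x m := by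
  have hsum : birkhoffSum T (fun y => f y - c) (m + 1) x =
      birkhoffSum T f (m + 1) x - (m + 1) * c := by
    simp [birkhoffSum, Finset.sum_sub_distrib]
  rw [hsum, birkAvg_eq_birkhoffSum_div, lt_div_iff₀ (by positivity)]
  constructor <;> intro h <;> linarith

lemma iUnion_partialSups_birkhoffSum_sub_const_pos (T : X → X) (f : X → ℝ) (c : ℝ) :
    ⋃ n, {x | 0 < partialSups (birkhoffSum T (fun y => f y - c)) n x} =
      {x | ∃ m, c < birkAvg T f x m} := by
  ext x
  simp only [Set.mem_iUnion, Set.mem_ofPred_eq, lt_partialSups_apply_iff]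
  constructor
  · rintro ⟨n, k | m, -, hk⟩
    · simp at hk
    · exact ⟨m, (birkhoffSum_sub_const_pos_iff T f c x m).mp hk⟩
  · rintro ⟨m, hm⟩
    exact ⟨m + 1, m + 1, le_rfl, (birkhoffSum_sub_const_pos_iff T f c x m).mpr hm⟩

variable [MeasurableSpace X] {μ : Measure X} {T : X → X} {g : X → ℝ}

lemma measurable_birkhoffSum (hT : Measurable T) (hg : Measurable g) (n : ℕ) :
    Measurable (birkhoffSum T g n) :=
  Finset.measurable_sum _ fun k _ => hg.comp (hT.iterate k)

lemma measurable_partialSups_birkhoffSum (hT : Measurable T) (hg : Measurable g) (n : ℕ) :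
    Measurable (partialSups (birkhoffSum T g) n) := by
  rw [partialSups_apply]
  exact Finset.measurable_sup' _ fun k _ => measurable_birkhoffSum hT hg k

lemma measurableSet_exists_lt_birkAvg (hT : Measurable T) (hg : Measurable g) (c : ℝ) :
    MeasurableSet {x | ∃ m, c < birkAvg T g x m} := by
  rw [Set.ofPred_exists]
  exact .iUnion fun m => measurableSet_lt measurable_const
    ((measurable_birkhoffSum hT hg (m + 1)).div_const _)

lemma integrable_birkhoffSum (hT : MeasurePreserving T μ μ) (hg : Integrable g μ) (n : ℕ) :
    Integrable (birkhoffSum T g n) μ :=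
  integrable_finsetSum _ fun k _ => (hT.iterate k).integrable_comp_of_integrable hg

lemma integrable_partialSups_birkhoffSum (hT : MeasurePreserving T μ μ) (hg : Integrable g μ)
    (n : ℕ) : Integrable (partialSups (birkhoffSum T g) n) μ := by
  induction n with
  | zero => simp
  | succ n ih =>
    rw [← Order.succ_eq_add_one, partialSups_succ]
    exact ih.sup (integrable_birkhoffSum hT hg _)

/-- Garsia's maximal ergodic lemma. -/
theorem setIntegral_partialSups_birkhoffSum_pos_nonneg (hT : MeasurePreserving T μ μ)
    (hg : Measurable g) (hgi : Integrable g μ) (n : ℕ) :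
    0 ≤ ∫ x in {x | 0 < partialSups (birkhoffSum T g) n x}, g x ∂μ := by
  set M := partialSups (birkhoffSum T g) n
  set E := {x | 0 < M x}
  have hE : MeasurableSet E :=
    measurableSet_lt measurable_const (measurable_partialSups_birkhoffSum hT.measurable hg n)
  have hMi : Integrable M μ := integrable_partialSups_birkhoffSum hT hgi n
  have hMTi : Integrable (M ∘ T) μ := hT.integrable_comp_of_integrable hMi
  -- off `E` the maximum vanishes, so `M ≤ 1_E g + M ∘ T` holds everywhere
  have hpt : M ≤ E.indicator g + M ∘ T := fun x => by
    by_cases hx : x ∈ E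
    · have := partialSups_birkhoffSum_le_max T g n x
      simp only [Pi.add_apply, Set.indicator_of_mem hx, Function.comp_apply]
      exact (le_max_iff.mp this).resolve_left (not_le.mpr hx)
    · simp only [Pi.add_apply, Set.indicator_of_notMem hx, zero_add, Function.comp_apply]
      exact (not_lt.mp hx).trans (partialSups_birkhoffSum_nonneg T g n (T x))
  have hMT : ∫ x, M (T x) ∂μ = ∫ x, M x ∂μ := by
    have hMm : AEStronglyMeasurable M (μ.map T) := by
      rw [hT.map_eq]; exact hMi.aestronglyMeasurable
    rw [← integral_map hT.aemeasurable hMm, hT.map_eq]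
  have := integral_mono hMi ((hgi.indicator hE).add hMTi) hpt
  rw [integral_add' (hgi.indicator hE) hMTi, integral_indicator hE] at this
  simp only [Function.comp_apply, hMT] at this
  linarith

/-- The maximal ergodic inequality, obtained from Garsia's lemma for `f - c` by letting the
horizon tend to infinity. -/
theorem mul_measureReal_le_setIntegral_of_lt_birkAvg [IsFiniteMeasure μ]
    (hT : MeasurePreserving T μ μ) (hg : Measurable g) (hgi : Integrable g μ) (c : ℝ) :
    c * μ.real {x | ∃ m, c < birkAvg T g x m} ≤ ∫ x in {x | ∃ m, c < birkAvg T g x m}, g x ∂μ := by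
  set E : ℕ → Set X := fun n => {x | 0 < partialSups (birkhoffSum T (fun y => g y - c)) n x}
  have hE n : MeasurableSet (E n) := measurableSet_lt measurable_const
    (measurable_partialSups_birkhoffSum hT.measurable (hg.sub measurable_const) n)
  have hmono : Monotone E := fun n m hnm x hx =>
    hx.trans_le ((partialSups (birkhoffSum T fun y => g y - c)).monotone hnm x)
  have hbound n : c * μ.real (E n) ≤ ∫ x in E n, g x ∂μ := by
    have := setIntegral_partialSups_birkhoffSum_pos_nonneg (g := fun y => g y - c) hT
      (hg.sub measurable_const) (hgi.sub (integrable_const c)) n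
    rw [integral_sub hgi.integrableOn (integrable_const c), setIntegral_const, smul_eq_mul] at this
    linarith
  rw [← iUnion_partialSups_birkhoffSum_sub_const_pos]
  refine le_of_tendsto_of_tendsto' ?_ (tendsto_setIntegral_of_monotone hE hmono hgi.integrableOn)
    hbound
  exact ((ENNReal.tendsto_toReal (measure_ne_top μ _)).comp
    (tendsto_measure_iUnion_atTop hmono)).const_mul c

end MaximalErgodic

/-- if `h ≥ 0` with `∫ h dμ < ε` and `δ > 0`, then there are `n` and a set
`A` with `μ(A) < 4ε/δ` such that all Cesàro averages of `h` at times `≥ n` are `< δ`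
outside `A`. -/
theorem stmt_8 {X : Type*} [MeasurableSpace X] (μ : Measure X) [IsProbabilityMeasure μ]
    (T : X → X) (hT : MeasurePreserving T μ μ)
    (h : X → ℝ) (hmeas : Measurable h) (hint : Integrable h μ)
    (hpos : ∀ x, 0 ≤ h x) (ε δ : ℝ) (hδ : 0 < δ)
    (hε : ∫ x, h x ∂μ < ε) :
    ∃ (n : ℕ) (A : Set X), MeasurableSet A ∧ μ A < ENNReal.ofReal (4 * ε / δ) ∧
      ∀ x ∉ A, ∀ n' ≥ n, birkAvg T h x n' < δ := by
  set A := {x | ∃ m, δ / 2 < birkAvg T h x m}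
  have hmax := mul_measureReal_le_setIntegral_of_lt_birkAvg hT hmeas hint (δ / 2)
  have hA_le : ∫ x in A, h x ∂μ ≤ ∫ x, h x ∂μ :=
    setIntegral_le_integral hint (.of_forall hpos)
  have hε_pos : 0 < ε := (integral_nonneg hpos).trans_lt hε
  refine ⟨0, A, measurableSet_exists_lt_birkAvg hT.measurable hmeas _, ?_, fun x hx n' _ => ?_⟩
  · rw [← ofReal_measureReal, ENNReal.ofReal_lt_ofReal_iff (by positivity), lt_div_iff₀ hδ]
    nlinarith
  · simp only [A, Set.mem_ofPred_eq, not_exists, not_lt] at hx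
    linarith [hx n']
end

section
/- A loose upcrossing sequence starting late is a genuine upcrossing sequence: suppose x is such that (1/(n'+1))Σ_{j=0}^{n'} h(T^j x) ≤ δ for all n' ≥ n, where h ≥ 0. Then any loose upcrossing sequence n ≤ u₁ < v₁ < ⋯ < u_N < v_N for α, β, f, h (with β − α > δ) is an upcrossing sequence for α, β − δ and f. -/
open MeasureTheory Filter
open scoped ENNReal NNReal

theorem birkAvg_add {X : Type*} (T : X → X) (f g : X → ℝ) (x : X) (m : ℕ) :
    birkAvg T (fun y => f y + g y) x m = birkAvg T f x m + birkAvg T g x m := by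
  simp only [birkAvg, Finset.sum_add_distrib, add_div]

namespace LooseUpcross

variable {X : Type*} {T : X → X} {f h : X → ℝ} {α β : ℝ} {x : X} {N : ℕ} {u v : ℕ → ℕ}

theorem u_zero_le_u (hl : LooseUpcross T f h α β x N u v) :
    ∀ i < N, u 0 ≤ u i
  | 0, _ => le_rfl
  | i + 1, hi =>
    calc u 0 ≤ u i := hl.u_zero_le_u i (by omega)
      _ ≤ u (i + 1) := ((hl.1 i (by omega)).trans (hl.2.1 i hi)).le

theorem upcross_sub_of_birkAvg_le (hl : LooseUpcross T f h α β x N u v) {δ : ℝ}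
    (hδ : ∀ i < N, birkAvg T h x (v i) ≤ δ) :
    Upcross T f α (β - δ) x N u v := by
  obtain ⟨huv, hvu, hu, hv⟩ := hl
  refine ⟨huv, hvu, hu, fun i hi => ?_⟩
  have := hv i hi
  rw [birkAvg_add] at this
  linarith [hδ i hi]

end LooseUpcross

theorem stmt_9_general {X : Type*} (T : X → X) (f h : X → ℝ)
    (x : X) (n : ℕ) (δ : ℝ)
    (hbound : ∀ n' ≥ n, birkAvg T h x n' ≤ δ)
    (α β : ℝ)
    (N : ℕ) (u v : ℕ → ℕ) (hstart : 0 < N → n ≤ u 0)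
    (hl : LooseUpcross T f h α β x N u v) :
    Upcross T f α (β - δ) x N u v :=
  hl.upcross_sub_of_birkAvg_le fun i hi =>
    hbound (v i) <| calc
      n ≤ u 0 := hstart (by omega)
      _ ≤ u i := hl.u_zero_le_u i hi
      _ ≤ v i := (hl.1 i hi).le

/-- if the Cesàro averages of `h ≥ 0` at `x` are `≤ δ` from time `n` on,
then any loose upcrossing sequence for `α, β, f, h` starting at time `≥ n` (with
`β − α > δ`) is an upcrossing sequence for `α, β − δ` and `f`. -/
theorem stmt_9 {X : Type*} (T : X → X) (f h : X → ℝ) (hpos : ∀ y, 0 ≤ h y)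
    (x : X) (n : ℕ) (δ : ℝ)
    (hbound : ∀ n' ≥ n, birkAvg T h x n' ≤ δ)
    (α β : ℝ) (hαβ : δ < β - α)
    (N : ℕ) (u v : ℕ → ℕ) (hstart : 0 < N → n ≤ u 0)
    (hl : LooseUpcross T f h α β x N u v) :
    Upcross T f α (β - δ) x N u v :=
  stmt_9_general T f h x n δ hbound α β N u v hstart hl
end
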